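/- arXiv:2309.09135 — 2 statements merged into one kernel-verified Lean document; each statement's English description precedes it below -/
import Mathlib

section
/- Let X be a proper geodesic metric space with basepoint o, let Y ⊆ X, and suppose ΛY ≠ ∅. Then the following are equivalent for x ∈ ∂X_o: (1) x is a Morse conical limit point of Y; (2) there exists K > 0 such that for every Morse gauge N, every N-Morse geodesic ray α:[0,∞)→X with α(0)=o and α(∞)=x, and every T > 0, there exists y ∈ Y with y in the K-neighborhood of the subray α':[0,∞)→X defined by α'(t)=α(t+T). -/
set_option autoImplicit false

universe u v

open Set Metric

/-- A map `γ : ℝ → X` is a (unit–speed) geodesic on the interval `[s, t]`. -/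
def IsGeodesicOn {X : Type*} [MetricSpace X] (γ : ℝ → X) (s t : ℝ) : Prop :=
  ∀ u ∈ Set.Icc s t, ∀ v ∈ Set.Icc s t, dist (γ u) (γ v) = |u - v|

/-- A geodesic ray defined on the domain `[a, ∞)`. -/
def IsGeodesicRay {X : Type*} [MetricSpace X] (a : ℝ) (α : ℝ → X) : Prop :=
  ∀ u ∈ Set.Ici a, ∀ v ∈ Set.Ici a, dist (α u) (α v) = |u - v|

/-- A bi-infinite geodesic line. -/
def IsGeodesicLine {X : Type*} [MetricSpace X] (γ : ℝ → X) : Prop :=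
  ∀ u v : ℝ, dist (γ u) (γ v) = |u - v|

/-- `X` is a geodesic metric space: any two points are joined by a geodesic segment. -/
def IsGeodesicSpace (X : Type*) [MetricSpace X] : Prop :=
  ∀ x y : X, ∃ γ : ℝ → X, IsGeodesicOn γ 0 (dist x y) ∧ γ 0 = x ∧ γ (dist x y) = y

/-- A `(K, C)`-quasi-geodesic defined on the interval `[s, t]`. -/
def IsQuasiGeodesicOn {X : Type*} [MetricSpace X] (K C : ℝ) (φ : ℝ → X) (s t : ℝ) : Prop :=
  ∀ u ∈ Set.Icc s t, ∀ v ∈ Set.Icc s t,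
    (1 / K) * |u - v| - C ≤ dist (φ u) (φ v) ∧ dist (φ u) (φ v) ≤ K * |u - v| + C

/-- A Morse gauge: a function `N : [1,∞) × [0,∞) → [0,∞)`. -/
abbrev MorseGauge : Type :=
  {N : ℝ → ℝ → ℝ // ∀ K C : ℝ, 1 ≤ K → 0 ≤ C → 0 ≤ N K C}

/-- A subset `S ⊆ X` (e.g. the image of a (quasi-)geodesic) is `N`-Morse if every
`(K, C)`-quasi-geodesic with endpoints on `S` stays in the `N (K, C)`-neighborhood of `S`. -/
def IsMorseSet {X : Type*} [MetricSpace X] (N : MorseGauge) (S : Set X) : Prop :=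
  ∀ K C : ℝ, 1 ≤ K → 0 ≤ C → ∀ (φ : ℝ → X) (s t : ℝ), s ≤ t →
    IsQuasiGeodesicOn K C φ s t → φ s ∈ S → φ t ∈ S →
    ∀ u ∈ Set.Icc s t, ∃ p ∈ S, dist (φ u) p ≤ N.1 K C

/-- The constant `δ_N = max {4N(1, 2N(5,0)) + 2N(5,0), 8N(3,0)} + N(5,0)`. -/
noncomputable def deltaGauge (N : MorseGauge) : ℝ :=
  max (4 * N.1 1 (2 * N.1 5 0) + 2 * N.1 5 0) (8 * N.1 3 0) + N.1 5 0

/-- Two rays `α, β` `K`-asymptotically fellow-travel: `α ∼_K β`. -/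
def FellowTravel {X : Type*} [MetricSpace X] (K : ℝ) (α β : ℝ → X) : Prop :=
  ∃ T : ℝ, ∀ t ≥ T, dist (α t) (β t) ≤ K

/-- Two subsets of `X` are at finite Hausdorff distance from each other. -/
def FinHausdorff {X : Type*} [MetricSpace X] (S T : Set X) : Prop :=
  ∃ C : ℝ, (∀ s ∈ S, ∃ t ∈ T, dist s t ≤ C) ∧ (∀ t ∈ T, ∃ s ∈ S, dist s t ≤ C)

/-- The closest point projection `π_S (x)` of `x` to a subset `S`. -/
noncomputable def nearestPoints {X : Type*} [MetricSpace X] (S : Set X) (x : X) : Set X :=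
  {s ∈ S | dist x s = Metric.infDist x S}

/-- The Morse stratum `X_o^N`: points `x` joined to `o` by an `N`-Morse geodesic. -/
def InMorseStratum {X : Type*} [MetricSpace X] (o : X) (N : MorseGauge) (x : X) : Prop :=
  ∃ γ : ℝ → X, IsGeodesicOn γ 0 (dist o x) ∧ γ 0 = o ∧ γ (dist o x) = x ∧
    IsMorseSet N (γ '' Set.Icc 0 (dist o x))

/-- The space of `N`-Morse geodesic rays emanating from `o`, with the topology of
pointwise (equivalently, since rays are `1`-Lipschitz, uniform-on-compact) convergence. -/
abbrev MorseRaysFrom {X : Type*} [MetricSpace X] (o : X) (N : MorseGauge) : Type _ :=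
  {α : ℝ → X // IsGeodesicRay 0 α ∧ α 0 = o ∧ IsMorseSet N (α '' Set.Ici 0)}

/-- Two Morse rays from `o` are identified when they are at finite Hausdorff distance. -/
def AsympRel {X : Type*} [MetricSpace X] (o : X)
    (p q : Σ N : MorseGauge, MorseRaysFrom o N) : Prop :=
  FinHausdorff (p.2.1 '' Set.Ici 0) (q.2.1 '' Set.Ici 0)

/-- The Morse boundary `∂X_o`: the direct limit over all Morse gauges `N` of the
boundaries `∂X_o^N` of the strata, realized as the quotient of the disjoint union of
the ray spaces; it carries the direct limit (quotient) topology. -/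
abbrev MorseBoundary {X : Type*} [MetricSpace X] (o : X) : Type _ :=
  Quot (AsympRel o)

/-- The boundary point `α(∞) ∈ ∂X_o` determined by a Morse geodesic ray from `o`. -/
def boundaryPoint {X : Type*} [MetricSpace X] (o : X) (N : MorseGauge)
    (α : MorseRaysFrom o N) : MorseBoundary o :=
  Quot.mk _ ⟨N, α⟩

/-- Membership `x ∈ ∂X_o^N` for a point of the Morse boundary. -/
def InStratumBoundary {X : Type*} [MetricSpace X] (o : X) (N : MorseGauge)
    (x : MorseBoundary o) : Prop :=
  ∃ α : MorseRaysFrom o N, boundaryPoint o N α = x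

/-- A geodesic ray `α : [a,∞) → X` converges to (represents) the point `x ∈ ∂X_o`,
written `α(∞) = x`: it is at finite Hausdorff distance from a Morse ray from `o`
representing `x`. -/
def RayConvergesTo {X : Type*} [MetricSpace X] (o : X) (a : ℝ) (α : ℝ → X)
    (x : MorseBoundary o) : Prop :=
  ∃ (N : MorseGauge) (β : MorseRaysFrom o N), boundaryPoint o N β = x ∧
    FinHausdorff (α '' Set.Ici a) (β.1 '' Set.Ici 0)

/-- The limit set `ΛA ⊆ ∂X_o` of `A ⊆ X`: points `x` such that, for some Morse gauge `N`,
there is a sequence in `A ∩ X_o^N` whose geodesics from `o` converge uniformly on compact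
sets to a geodesic ray representing `x`. -/
def limitSet {X : Type*} [MetricSpace X] (o : X) (A : Set X) : Set (MorseBoundary o) :=
  {x | ∃ (N : MorseGauge) (p : ℕ → X) (γ : ℕ → ℝ → X) (α : ℝ → X),
      (∀ k, p k ∈ A ∧ InMorseStratum o N (p k)) ∧
      (∀ k, IsGeodesicOn (γ k) 0 (dist o (p k)) ∧ γ k 0 = o ∧ γ k (dist o (p k)) = p k) ∧
      IsGeodesicRay 0 α ∧ α 0 = o ∧
      (∀ R > (0:ℝ), ∀ ε > (0:ℝ), ∃ K : ℕ, ∀ k ≥ K, R ≤ dist o (p k) ∧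
        ∀ t ∈ Set.Icc (0:ℝ) R, dist (γ k t) (α t) ≤ ε) ∧
      RayConvergesTo o 0 α x}

/-- The `N`-Morse horoball based at `o` around the geodesic ray `α : [a,∞) → X`,
where `M` is the Morse gauge of `α` (used via the constant `δ_M`). -/
def morseHoroball {X : Type*} [MetricSpace X] (o : X) (N M : MorseGauge) (a : ℝ)
    (α : ℝ → X) : Set X :=
  {x | InMorseStratum o N x ∧ ∃ b ≥ a, ∃ β : ℝ → X,
    IsGeodesicRay b β ∧ β b = x ∧ FellowTravel (deltaGauge M) α β}

/-- The `N`-Morse funnel based at `o` around the geodesic ray `α : [a,∞) → X`. -/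
noncomputable def morseFunnel {X : Type*} [MetricSpace X] (o : X) (N : MorseGauge) (a : ℝ)
    (α : ℝ → X) : Set X :=
  {x | InMorseStratum o N x ∧
    Metric.infDist x (α '' Set.Ici a) ≤
      Metric.infDist (α a) (nearestPoints (α '' Set.Ici a) x)}

/-- `x ∈ ∂X_o` is a Morse conical limit point of `A ⊆ X`: there is `K > 0` such that the
`K`-neighborhood of every Morse geodesic ray representing `x` meets `A`. -/
def IsMorseConicalLimitPoint {X : Type*} [MetricSpace X] (o : X) (A : Set X)
    (x : MorseBoundary o) : Prop :=
  ∃ K > (0:ℝ), ∀ (a : ℝ) (α : ℝ → X), IsGeodesicRay a α →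
    (∃ M : MorseGauge, IsMorseSet M (α '' Set.Ici a)) → RayConvergesTo o a α x →
    ∃ y ∈ A, Metric.infDist y (α '' Set.Ici a) ≤ K

/-- `x ∈ ∂X_o` is a Morse horospherical limit point of `A ⊆ X`: for every Morse geodesic
ray `α` representing `x` (with Morse gauge `M`), some Morse horoball about `α` meets `A`. -/
def IsMorseHoroLimitPoint {X : Type*} [MetricSpace X] (o : X) (A : Set X)
    (x : MorseBoundary o) : Prop :=
  ∀ (a : ℝ) (α : ℝ → X) (M : MorseGauge), IsGeodesicRay a α →
    IsMorseSet M (α '' Set.Ici a) → RayConvergesTo o a α x →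
    ∃ N : MorseGauge, (morseHoroball o N M a α ∩ A).Nonempty

/-- `x ∈ ∂X_o` is a Morse funnelled limit point of `A ⊆ X`: for every Morse geodesic ray
`α` representing `x`, some Morse funnel about `α` meets `A`. -/
def IsMorseFunnelLimitPoint {X : Type*} [MetricSpace X] (o : X) (A : Set X)
    (x : MorseBoundary o) : Prop :=
  ∀ (a : ℝ) (α : ℝ → X), IsGeodesicRay a α →
    (∃ M : MorseGauge, IsMorseSet M (α '' Set.Ici a)) → RayConvergesTo o a α x →
    ∃ N : MorseGauge, (morseFunnel o N a α ∩ A).Nonempty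

/-- The weak convex hull `WCH(B)` of a set `B ⊆ ∂X_o` of boundary points: the union of all
bi-infinite geodesics of `X` both of whose endpoints at infinity lie in `B`. -/
def weakConvexHull {X : Type*} [MetricSpace X] (o : X) (B : Set (MorseBoundary o)) :
    Set X :=
  {y | ∃ γ : ℝ → X, IsGeodesicLine γ ∧
    (∃ x₁ ∈ B, RayConvergesTo o 0 γ x₁) ∧
    (∃ x₂ ∈ B, RayConvergesTo o 0 (fun t => γ (-t)) x₂) ∧
    ∃ t : ℝ, γ t = y}

/-- The action of `H` on `X` is by isometries. -/
def IsIsometricAction (H X : Type*) [Group H] [MulAction H X] [MetricSpace X] : Prop :=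
  ∀ (h : H) (x y : X), dist (h • x) (h • y) = dist x y

/-- The action of `H` on `X` is (metrically) proper. -/
def IsProperAction (H : Type*) {X : Type*} [Group H] [MulAction H X] [MetricSpace X]
    (o : X) : Prop :=
  ∀ R : ℝ, {h : H | dist (h • o) o ≤ R}.Finite

/-- The orbit `H·o` of the basepoint. -/
def orbitSet (H : Type*) {X : Type*} [Group H] [MulAction H X] (o : X) : Set X :=
  Set.range fun h : H => h • o

/-- The action of `H` on the subset `Y ⊆ X` is cobounded: `Y` lies in a bounded
neighborhood of some `H`-orbit in `Y`. -/
def IsCoboundedActionOn (H : Type*) {X : Type*} [Group H] [MulAction H X] [MetricSpace X]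
    (Y : Set X) : Prop :=
  Y = ∅ ∨ ∃ p ∈ Y, ∃ R : ℝ, ∀ y ∈ Y, ∃ h : H, dist y (h • p) ≤ R

/-- The word metric on `H` associated to a generating set `S`. -/
noncomputable def wordDist {H : Type*} [Group H] (S : Set H) (g h : H) : ℕ :=
  sInf {n : ℕ | ∃ w : List H, (∀ u ∈ w, u ∈ S ∨ u⁻¹ ∈ S) ∧ w.length = n ∧ w.prod = g⁻¹ * h}

/-- The orbit map `h ↦ h • o` is a stable embedding: it is a quasi-isometric embedding of
`H` (with a word metric coming from a finite generating set) into `X`, and there is a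
Morse gauge `N` such that any two points of the orbit are joined by an `N`-Morse
quasi-geodesic of `X`. -/
def OrbitMapStable (H : Type*) {X : Type*} [Group H] [MulAction H X] [MetricSpace X]
    (o : X) : Prop :=
  ∃ S : Finset H, Subgroup.closure (S : Set H) = ⊤ ∧
    (∃ lam : ℝ, 1 ≤ lam ∧ ∀ g h : H,
      (wordDist (S : Set H) g h : ℝ) / lam - lam ≤ dist (g • o) (h • o) ∧
      dist (g • o) (h • o) ≤ lam * (wordDist (S : Set H) g h : ℝ) + lam) ∧
    ∃ N : MorseGauge, ∀ g h : H, ∃ (K C s t : ℝ) (φ : ℝ → X),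
      1 ≤ K ∧ 0 ≤ C ∧ s ≤ t ∧ IsQuasiGeodesicOn K C φ s t ∧ φ s = g • o ∧ φ t = h • o ∧
      IsMorseSet N (φ '' Set.Icc s t)

/-- `H` acts boundary convex cocompactly on `X` (with respect to the basepoint `o`):
the action is proper, the limit set `ΛH` is nonempty and compact, and the action of `H`
on the weak convex hull of `ΛH` is cobounded. -/
def BoundaryConvexCocompact (H : Type*) {X : Type*} [Group H] [MulAction H X]
    [MetricSpace X] (o : X) : Prop :=
  IsProperAction H o ∧ (limitSet o (orbitSet H o)).Nonempty ∧
    IsCompact (limitSet o (orbitSet H o)) ∧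
    IsCoboundedActionOn H (weakConvexHull o (limitSet o (orbitSet H o)))

/-- `X` is `δ`-hyperbolic (four-point condition). -/
def IsGromovHyperbolic (X : Type*) [MetricSpace X] (δ : ℝ) : Prop :=
  ∀ x y z w : X, dist x y + dist z w ≤ max (dist x z + dist y w) (dist x w + dist y z) + 2 * δ

/-- The horoball `H(α)` about a geodesic ray `α : [a,∞) → X` in a `δ`-hyperbolic space:
the union of the images of all geodesic rays `β : [b,∞) → X` with `β ∼_{6δ} α` and
`b ≥ a`. -/
def horoball {X : Type*} [MetricSpace X] (δ a : ℝ) (α : ℝ → X) : Set X :=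
  {x | ∃ b ≥ a, ∃ β : ℝ → X, IsGeodesicRay b β ∧ FellowTravel (6 * δ) α β ∧
    ∃ t ≥ b, β t = x}

/-- The funnel `F(α)` about a geodesic ray `α : [a,∞) → X`:
`F(α) = {x : d(x, α) ≤ d(π_α(x), α(a))}`. -/
noncomputable def funnel {X : Type*} [MetricSpace X] (a : ℝ) (α : ℝ → X) : Set X :=
  {x | Metric.infDist x (α '' Set.Ici a) ≤
    Metric.infDist (α a) (nearestPoints (α '' Set.Ici a) x)}

section AuxConical

variable {X : Type u} [MetricSpace X]

lemma ray_dist {a : ℝ} {α : ℝ → X} (h : IsGeodesicRay a α) {u v : ℝ}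
    (hu : a ≤ u) (hv : a ≤ v) : dist (α u) (α v) = |u - v| :=
  h u (mem_Ici.mpr hu) v (mem_Ici.mpr hv)

lemma infDist_ray_lip {a : ℝ} {α : ℝ → X} (h : IsGeodesicRay a α) (S : Set X) {u v : ℝ}
    (hu : a ≤ u) (hv : a ≤ v) :
    infDist (α u) S ≤ infDist (α v) S + |u - v| := by
  calc infDist (α u) S ≤ infDist (α v) S + dist (α u) (α v) := infDist_le_infDist_add_dist
  _ = infDist (α v) S + |u - v| := by rw [ray_dist h hu hv]

/-- The key quasi-geodesic construction: a geodesic segment of `α` whose endpoints are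
joined to near-nearest points `q₁, q₂` on `S`, staying `θ'`-far from `S` in between,
gives a `(3,1)`-quasi-geodesic with endpoints on `S`; hence by the Morse property of `S`
the middle of `α` is `N(3,1)`-close to `S`. -/
lemma morse_mid_bound (hgeo : IsGeodesicSpace X)
    (N : MorseGauge) (S : Set X) (hM : IsMorseSet N S)
    (α : ℝ → X) (t₁ t₂ θ' : ℝ) (hθ' : 0 < θ') (hLpos : 0 < t₂ - t₁)
    (hgeod : IsGeodesicOn α t₁ t₂)
    (q₁ q₂ : X) (h₁S : q₁ ∈ S) (h₂S : q₂ ∈ S)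
    (hup₁ : dist q₁ (α t₁) ≤ θ' + 1/2) (hup₂ : dist (α t₂) q₂ ≤ θ' + 1/2)
    (hlow : ∀ τ : ℝ, t₁ < τ → τ < t₂ → θ' ≤ infDist (α τ) S)
    (hL : 2 * (dist q₁ (α t₁) + dist (α t₂) q₂) ≤ t₂ - t₁) :
    ∀ τ ∈ Icc t₁ t₂, infDist (α τ) S ≤ N.1 3 1 := by
  obtain ⟨γ₁, hγ₁, hγ₁0, hγ₁e⟩ := hgeo q₁ (α t₁)
  obtain ⟨γ₂, hγ₂, hγ₂0, hγ₂e⟩ := hgeo (α t₂) q₂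
  set e₁ := dist q₁ (α t₁) with he₁def
  set e₂ := dist (α t₂) q₂ with he₂def
  set L := t₂ - t₁ with hLdef
  set E := e₁ + L + e₂ with hEdef
  have he₁0 : 0 ≤ e₁ := dist_nonneg
  have he₂0 : 0 ≤ e₂ := dist_nonneg
  have ht12 : t₁ ≤ t₂ := by linarith
  have h2e₁L : 2 * e₁ ≤ L := by linarith
  have h2e₂L : 2 * e₂ ≤ L := by linarith
  set φ : ℝ → X := fun s => if s ≤ e₁ then γ₁ s else if s ≤ e₁ + L then α (t₁ + (s - e₁))
    else γ₂ (s - (e₁ + L)) with hφdef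
  have hφ1 : ∀ s, s ≤ e₁ → φ s = γ₁ s := fun s h => by simp only [hφdef, if_pos h]
  have hφ2 : ∀ s, e₁ < s → s ≤ e₁ + L → φ s = α (t₁ + (s - e₁)) := fun s h h' => by
    simp only [hφdef, if_neg (not_le.mpr h), if_pos h']
  have hφ3 : ∀ s, e₁ + L < s → φ s = γ₂ (s - (e₁ + L)) := fun s h => by
    simp only [hφdef, if_neg (not_le.mpr (by linarith : e₁ < s)), if_neg (not_le.mpr h)]
  -- distances on pieces
  have dJ1 : ∀ s, 0 ≤ s → s ≤ e₁ → dist (γ₁ s) (α t₁) = e₁ - s := by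
    intro s h0 h1
    have := hγ₁ s ⟨h0, h1⟩ e₁ ⟨he₁0, le_rfl⟩
    rw [hγ₁e] at this
    rw [this, abs_of_nonpos (by linarith)]; ring
  have dJ1q : ∀ s, 0 ≤ s → s ≤ e₁ → dist (γ₁ s) q₁ = s := by
    intro s h0 h1
    have := hγ₁ s ⟨h0, h1⟩ 0 ⟨le_rfl, he₁0⟩
    rw [hγ₁0] at this
    rw [this, abs_of_nonneg (by linarith)]; ring
  have dJ2 : ∀ s, 0 ≤ s → s ≤ e₂ → dist (γ₂ s) (α t₂) = s := by
    intro s h0 h1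
    have := hγ₂ s ⟨h0, h1⟩ 0 ⟨le_rfl, he₂0⟩
    rw [hγ₂0] at this
    rw [this, abs_of_nonneg (by linarith)]; ring
  have dJ2q : ∀ s, 0 ≤ s → s ≤ e₂ → dist (γ₂ s) q₂ = e₂ - s := by
    intro s h0 h1
    have := hγ₂ s ⟨h0, h1⟩ e₂ ⟨he₂0, le_rfl⟩
    rw [hγ₂e] at this
    rw [this, abs_of_nonpos (by linarith)]; ring
  have dmid : ∀ τ ∈ Icc t₁ t₂, ∀ τ' ∈ Icc t₁ t₂, dist (α τ) (α τ') = |τ - τ'| := hgeod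
  -- the main two-sided estimate, for u ≤ v
  have main : ∀ u ∈ Icc (0:ℝ) E, ∀ v ∈ Icc (0:ℝ) E, u ≤ v →
      1/3 * (v - u) - 1 ≤ dist (φ u) (φ v) ∧ dist (φ u) (φ v) ≤ (v - u) := by
    intro u hu v hv huv
    obtain ⟨hu0, huE⟩ := hu
    obtain ⟨hv0, hvE⟩ := hv
    by_cases hu1 : u ≤ e₁
    · by_cases hv1 : v ≤ e₁
      · -- both on J₁
        rw [hφ1 u hu1, hφ1 v hv1, hγ₁ u ⟨hu0, hu1⟩ v ⟨hv0, hv1⟩,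
          abs_of_nonpos (by linarith)]
        constructor <;> linarith
      · push_neg at hv1
        by_cases hv2 : v ≤ e₁ + L
        · -- u on J₁, v in middle
          set A := v - e₁ with hA
          set B := e₁ - u with hB
          set τ := t₁ + (v - e₁) with hτ
          have hτmem : τ ∈ Icc t₁ t₂ := ⟨by simp only [hτ]; linarith, by simp only [hτ]; linarith⟩
          have hφv : φ v = α τ := hφ2 v hv1 hv2
          have hφu : φ u = γ₁ u := hφ1 u hu1
          have dB : dist (φ u) (α t₁) = B := by rw [hφu]; exact dJ1 u hu0 hu1
          have dA : dist (α t₁) (φ v) = A := by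
            rw [hφv, dmid t₁ ⟨le_rfl, ht12⟩ τ hτmem, hτ, abs_of_nonpos (by linarith)]; ring
          have hupper : dist (φ u) (φ v) ≤ B + A := by
            calc dist (φ u) (φ v) ≤ dist (φ u) (α t₁) + dist (α t₁) (φ v) := dist_triangle _ _ _
            _ = B + A := by rw [dB, dA]
          constructor
          · by_cases hc : 2 * B ≤ A
            · have htri : A ≤ B + dist (φ u) (φ v) := by
                calc A = dist (α t₁) (φ v) := dA.symm
                _ ≤ dist (α t₁) (φ u) + dist (φ u) (φ v) := dist_triangle _ _ _
                _ = B + dist (φ u) (φ v) := by rw [dist_comm (α t₁) (φ u), dB]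
              linarith
            · push_neg at hc
              have hτlt : τ < t₂ := by simp only [hτ]; nlinarith
              have hτgt : t₁ < τ := by simp only [hτ]; linarith
              have hlowτ := hlow τ hτgt hτlt
              have hq1u : dist (φ u) q₁ = u := by rw [hφu]; exact dJ1q u hu0 hu1
              have hest : infDist (α τ) S ≤ dist (φ u) (φ v) + u := by
                calc infDist (α τ) S ≤ dist (α τ) q₁ := infDist_le_dist_of_mem h₁S
                _ ≤ dist (α τ) (φ u) + dist (φ u) q₁ := dist_triangle _ _ _
                _ = dist (φ u) (φ v) + u := by
                    rw [hq1u, ← hφv, dist_comm (φ v) (φ u)]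
              have : B - 1/2 ≤ dist (φ u) (φ v) := by
                have : e₁ ≤ θ' + 1/2 := hup₁
                simp only [hB]; linarith
              linarith
          · calc dist (φ u) (φ v) ≤ B + A := hupper
              _ = v - u := by simp only [hA, hB]; ring
        · -- u on J₁, v on J₂
          push_neg at hv2
          set B₁ := e₁ - u with hB₁
          set B₂ := v - (e₁ + L) with hB₂
          have hB₂e : B₂ ≤ e₂ := by simp only [hB₂]; linarith
          have hφu : φ u = γ₁ u := hφ1 u hu1
          have hφv : φ v = γ₂ (v - (e₁ + L)) := hφ3 v hv2
          have dB₁ : dist (φ u) (α t₁) = B₁ := by rw [hφu]; exact dJ1 u hu0 hu1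
          have dB₂ : dist (φ v) (α t₂) = B₂ := by
            rw [hφv]; exact dJ2 _ (by linarith) hB₂e
          have dL : dist (α t₁) (α t₂) = L := by
            rw [dmid t₁ ⟨le_rfl, ht12⟩ t₂ ⟨ht12, le_rfl⟩, abs_of_nonpos (by linarith)]
            simp only [hLdef]; ring
          have hlower : L - B₁ - B₂ ≤ dist (φ u) (φ v) := by
            have : dist (α t₁) (α t₂) ≤ dist (α t₁) (φ u) + dist (φ u) (φ v) + dist (φ v) (α t₂) :=
              dist_triangle4 _ _ _ _
            rw [dL, dist_comm (α t₁) (φ u), dB₁, dB₂] at this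
            linarith
          have hupper : dist (φ u) (φ v) ≤ B₁ + L + B₂ := by
            have : dist (φ u) (φ v) ≤ dist (φ u) (α t₁) + dist (α t₁) (α t₂) + dist (α t₂) (φ v) :=
              dist_triangle4 _ _ _ _
            rw [dB₁, dL, dist_comm (α t₂) (φ v), dB₂] at this
            linarith
          have hvu : v - u = B₁ + L + B₂ := by simp only [hB₁, hB₂]; ring
          have hB₁e : B₁ ≤ e₁ := by simp only [hB₁]; linarith
          constructor
          · rw [hvu]; linarith
          · rw [hvu]; linarith
    · push_neg at hu1
      by_cases hu2 : u ≤ e₁ + L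
      · by_cases hv2 : v ≤ e₁ + L
        · -- both in middle
          set τu := t₁ + (u - e₁) with hτu
          set τv := t₁ + (v - e₁) with hτv
          have hmu : τu ∈ Icc t₁ t₂ := ⟨by simp only [hτu]; linarith, by simp only [hτu]; linarith⟩
          have hmv : τv ∈ Icc t₁ t₂ := ⟨by simp only [hτv]; linarith, by simp only [hτv]; linarith⟩
          rw [hφ2 u hu1 hu2, hφ2 v (by linarith) hv2, dmid τu hmu τv hmv,
            abs_of_nonpos (by simp only [hτu, hτv]; linarith)]
          simp only [hτu, hτv]
          constructor <;> linarith
        · -- u in middle, v on J₂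
          push_neg at hv2
          set τ := t₁ + (u - e₁) with hτ
          set A := (e₁ + L) - u with hA
          set B := v - (e₁ + L) with hB
          have hBe : B ≤ e₂ := by simp only [hB]; linarith
          have hB0 : 0 < B := by simp only [hB]; linarith
          have hτmem : τ ∈ Icc t₁ t₂ := ⟨by simp only [hτ]; linarith, by simp only [hτ]; linarith⟩
          have hφu : φ u = α τ := hφ2 u hu1 hu2
          have hφv : φ v = γ₂ (v - (e₁ + L)) := hφ3 v hv2
          have dB : dist (φ v) (α t₂) = B := by rw [hφv]; exact dJ2 _ (by linarith) hBe
          have dq₂ : dist (φ v) q₂ = e₂ - B := by rw [hφv]; exact dJ2q _ (by linarith) hBe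
          have dA : dist (φ u) (α t₂) = A := by
            rw [hφu, dmid τ hτmem t₂ ⟨ht12, le_rfl⟩, abs_of_nonpos (by simp only [hτ]; linarith)]
            simp only [hτ, hLdef, hA]; ring
          have hupper : dist (φ u) (φ v) ≤ A + B := by
            calc dist (φ u) (φ v) ≤ dist (φ u) (α t₂) + dist (α t₂) (φ v) := dist_triangle _ _ _
            _ = A + B := by rw [dA, dist_comm (α t₂) (φ v), dB]
          have hvu : v - u = A + B := by simp only [hA, hB]; ring
          constructor
          · by_cases hc : 2 * B ≤ A
            · have htri : A ≤ B + dist (φ u) (φ v) := by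
                calc A = dist (φ u) (α t₂) := dA.symm
                _ ≤ dist (φ u) (φ v) + dist (φ v) (α t₂) := dist_triangle _ _ _
                _ = dist (φ u) (φ v) + B := by rw [dB]
                _ = B + dist (φ u) (φ v) := by ring
              rw [hvu]; linarith
            · push_neg at hc
              by_cases hA0 : A ≤ 0
              · have hA0' : A = 0 := le_antisymm hA0 (by simp only [hA]; linarith)
                have : dist (φ u) (φ v) = B := by
                  have harg : τ = t₂ := by simp only [hτ, hLdef] at hA0' ⊢; linarith
                  rw [hφu, harg, dist_comm]; exact dB
                rw [hvu, this, hA0']; linarith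
              · push_neg at hA0
                have hτlt : τ < t₂ := by simp only [hτ]; simp only [hA] at hA0; linarith
                have hτgt : t₁ < τ := by simp only [hτ]; linarith
                have hlowτ := hlow τ hτgt hτlt
                have hest : infDist (α τ) S ≤ dist (φ u) (φ v) + (e₂ - B) := by
                  calc infDist (α τ) S ≤ dist (α τ) q₂ := infDist_le_dist_of_mem h₂S
                  _ ≤ dist (α τ) (φ v) + dist (φ v) q₂ := dist_triangle _ _ _
                  _ = dist (φ u) (φ v) + (e₂ - B) := by rw [dq₂, ← hφu]
                have he₂b : e₂ ≤ θ' + 1/2 := hup₂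
                rw [hvu]; linarith
          · rw [hvu]; exact hupper
      · -- both on J₂
        push_neg at hu2
        have hru : u - (e₁ + L) ∈ Icc (0:ℝ) e₂ := ⟨by linarith, by linarith⟩
        have hrv : v - (e₁ + L) ∈ Icc (0:ℝ) e₂ := ⟨by linarith, by linarith⟩
        rw [hφ3 u hu2, hφ3 v (by linarith), hγ₂ _ hru _ hrv, abs_of_nonpos (by linarith)]
        constructor <;> linarith
  -- quasi-geodesic property
  have hq : IsQuasiGeodesicOn 3 1 φ 0 E := by
    intro u hu v hv
    rcases le_total u v with h | h
    · have hm := main u hu v hv h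
      rw [abs_of_nonpos (by linarith), neg_sub]
      exact ⟨by linarith [hm.1], by linarith [hm.2]⟩
    · have hm := main v hv u hu h
      rw [dist_comm, abs_of_nonneg (by linarith)]
      exact ⟨by linarith [hm.1], by linarith [hm.2]⟩
  -- endpoints
  have hE0 : (0:ℝ) ≤ E := by simp only [hEdef]; linarith
  have hφ0 : φ 0 = q₁ := by rw [hφ1 0 he₁0, hγ₁0]
  have hφE : φ E = q₂ := by
    by_cases hE2 : E ≤ e₁ + L
    · have he₂z : e₂ = 0 := le_antisymm (by simp only [hEdef] at hE2; linarith) he₂0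
      have hq₂eq : α t₂ = q₂ := by
        have : dist (α t₂) q₂ = 0 := by rw [← he₂def, he₂z]
        exact eq_of_dist_eq_zero this
      have hEe₁ : e₁ < E := by simp only [hEdef]; linarith
      rw [hφ2 E hEe₁ hE2]
      have harg : t₁ + (E - e₁) = t₂ := by simp only [hEdef, hLdef, he₂z]; ring_nf
      rw [harg, hq₂eq]
    · push_neg at hE2
      rw [hφ3 E hE2]
      have harg : E - (e₁ + L) = e₂ := by simp only [hEdef]; ring
      rw [harg, hγ₂e]
  -- apply the Morse property
  intro τ hτ
  have hmem : e₁ + (τ - t₁) ∈ Icc (0:ℝ) E := by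
    constructor
    · have := hτ.1; linarith
    · have := hτ.2; simp only [hEdef, hLdef]; linarith
  have hφτ : φ (e₁ + (τ - t₁)) = α τ := by
    rcases eq_or_lt_of_le hτ.1 with heq | hlt
    · have harg : e₁ + (τ - t₁) = e₁ := by rw [← heq]; ring
      rw [harg, hφ1 e₁ le_rfl, hγ₁e, ← heq]
    · have h1 : e₁ < e₁ + (τ - t₁) := by linarith
      have h2 : e₁ + (τ - t₁) ≤ e₁ + L := by have := hτ.2; simp only [hLdef]; linarith
      rw [hφ2 _ h1 h2]
      have harg : t₁ + (e₁ + (τ - t₁) - e₁) = τ := by ring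
      rw [harg]
  obtain ⟨p, hpS, hpd⟩ := hM 3 1 (by norm_num) (by norm_num) φ 0 E hE0 hq
    (hφ0 ▸ h₁S) (hφE ▸ h₂S) (e₁ + (τ - t₁)) hmem
  calc infDist (α τ) S ≤ dist (α τ) p := infDist_le_dist_of_mem hpS
  _ = dist (φ (e₁ + (τ - t₁))) p := by rw [hφτ]
  _ ≤ N.1 3 1 := hpd

end AuxConical
section AuxConical2

variable {X : Type u} [MetricSpace X]

/-- If `α` stays uniformly far from the Morse set `S` forever, we contradict the Morse
property; so `α` comes `N(3,1)+1`-close to `S` at arbitrarily large times. -/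
lemma annulus_step (hgeo : IsGeodesicSpace X) (N : MorseGauge) (S : Set X)
    (hS : S.Nonempty) (hM : IsMorseSet N S)
    (a : ℝ) (α : ℝ → X) (hα : IsGeodesicRay a α)
    (C : ℝ) (hC : ∀ t ≥ a, infDist (α t) S ≤ C)
    (T₁ : ℝ) (hT₁ : a ≤ T₁) :
    ∃ τ ≥ T₁, infDist (α τ) S ≤ N.1 3 1 + 1 := by
  by_contra hcon
  push_neg at hcon
  -- hcon : ∀ τ ≥ T₁, N.1 3 1 + 1 < infDist (α τ) S
  set Q := N.1 3 1 with hQdef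
  have hQ0 : 0 ≤ Q := N.2 3 1 (by norm_num) (by norm_num)
  have hC0 : 0 ≤ C := le_trans infDist_nonneg (hC a le_rfl)
  set e : ℝ → ℝ := fun τ => infDist (α τ) S with hedef
  have hbdd : ∀ W : ℝ, BddBelow (e '' Ici W) := by
    intro W
    exact ⟨0, by rintro _ ⟨τ, _, rfl⟩; exact infDist_nonneg⟩
  have hne : ∀ W : ℝ, (e '' Ici W).Nonempty := fun W => ⟨e W, W, mem_Ici.mpr le_rfl, rfl⟩
  set g : ℝ → ℝ := fun W => sInf (e '' Ici W) with hgdef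
  have hgle : ∀ W, T₁ ≤ W → g W ≤ C := by
    intro W hW
    calc g W ≤ e W := csInf_le (hbdd W) ⟨W, mem_Ici.mpr le_rfl, rfl⟩
    _ ≤ C := hC W (le_trans hT₁ hW)
  have hgRne : (g '' Ici T₁).Nonempty := ⟨g T₁, T₁, mem_Ici.mpr le_rfl, rfl⟩
  have hgRbdd : BddAbove (g '' Ici T₁) := ⟨C, by rintro _ ⟨W, hW, rfl⟩; exact hgle W hW⟩
  set m := sSup (g '' Ici T₁) with hmdef
  have hgθ : ∀ W, T₁ ≤ W → Q + 1 ≤ g W := by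
    intro W hW
    refine le_csInf (hne W) ?_
    rintro _ ⟨τ, hτ, rfl⟩
    exact (hcon τ (le_trans hW hτ)).le
  have hmθ : Q + 1 ≤ m := le_trans (hgθ T₁ le_rfl) (le_csSup hgRbdd ⟨T₁, mem_Ici.mpr le_rfl, rfl⟩)
  have hmC : m ≤ C := csSup_le hgRne (by rintro _ ⟨W, hW, rfl⟩; exact hgle W hW)
  -- choose W with g W > m - 1/8
  obtain ⟨_, ⟨W, hWT, rfl⟩, hWg⟩ := exists_lt_of_lt_csSup hgRne (by linarith : m - 1/8 < m)
  have hge : ∀ τ, W ≤ τ → m - 1/8 < e τ := by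
    intro τ hτ
    exact lt_of_lt_of_le hWg (csInf_le (hbdd W) ⟨τ, mem_Ici.mpr hτ, rfl⟩)
  -- choose t₁ ≥ W with e t₁ < m + 1/8
  have hgWm : g W ≤ m := le_csSup hgRbdd ⟨W, hWT, rfl⟩
  obtain ⟨_, ⟨t₁, ht₁W, rfl⟩, ht₁e⟩ := exists_lt_of_csInf_lt (hne W) (by linarith : g W < m + 1/8)
  -- choose t₂ ≥ max W (t₁ + 4C + 2) with e t₂ < m + 1/8
  set W' := max W (t₁ + (4*C + 2)) with hW'def
  have hW'T : T₁ ≤ W' := le_trans hWT (le_max_left _ _)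
  have hgW'm : g W' ≤ m := le_csSup hgRbdd ⟨W', mem_Ici.mpr hW'T, rfl⟩
  obtain ⟨_, ⟨t₂, ht₂W, rfl⟩, ht₂e⟩ := exists_lt_of_csInf_lt (hne W') (by linarith : g W' < m + 1/8)
  have ht₂W'' : t₁ + (4*C + 2) ≤ t₂ := le_trans (le_max_right _ _) ht₂W
  have ht₂Wb : W ≤ t₂ := le_trans (le_max_left _ _) ht₂W
  have ht₁a : a ≤ t₁ := le_trans hT₁ (le_trans hWT ht₁W)
  have ht₂a : a ≤ t₂ := le_trans ht₁a (by linarith)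
  -- approximate nearest points
  obtain ⟨q₁, h₁S, hd₁⟩ := (infDist_lt_iff hS).1 (show e t₁ < m + 1/4 by linarith)
  obtain ⟨q₂, h₂S, hd₂⟩ := (infDist_lt_iff hS).1 (show e t₂ < m + 1/4 by linarith)
  have hmb := morse_mid_bound hgeo N S hM α t₁ t₂ (m - 1/8)
    (by linarith) (by linarith)
    (fun u hu v hv => hα u (le_trans ht₁a hu.1) v (le_trans ht₁a hv.1))
    q₁ q₂ h₁S h₂S
    (by rw [dist_comm]; linarith)
    (by linarith)
    (fun τ hτ₁ hτ₂ => (hge τ (le_trans ht₁W hτ₁.le)).le)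
    (by rw [dist_comm q₁ (α t₁)]; linarith)
  have := hmb t₁ ⟨le_rfl, by linarith⟩
  have h1 : m - 1/8 < e t₁ := hge t₁ ht₁W
  have : e t₁ ≤ Q := this
  linarith

/-- Lemma A: a geodesic ray `α` at bounded distance from an `N`-Morse set `S` (the image
of another ray) is eventually `5 N(3,1) + 7`-close to `S`. -/
lemma eventual_close (hgeo : IsGeodesicSpace X) (N : MorseGauge) (S : Set X)
    (hS : S.Nonempty) (hM : IsMorseSet N S)
    (a : ℝ) (α : ℝ → X) (hα : IsGeodesicRay a α)
    (C : ℝ) (hC : ∀ t ≥ a, infDist (α t) S ≤ C) :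
    ∃ T ≥ a, ∀ t ≥ T, infDist (α t) S ≤ 5 * N.1 3 1 + 7 := by
  set Q := N.1 3 1 with hQdef
  have hQ0 : 0 ≤ Q := N.2 3 1 (by norm_num) (by norm_num)
  set θ := Q + 1 with hθdef
  set e : ℝ → ℝ := fun τ => infDist (α τ) S with hedef
  have hlip : ∀ u ≥ a, ∀ v ≥ a, e u ≤ e v + |u - v| :=
    fun u hu v hv => infDist_ray_lip hα S hu hv
  obtain ⟨τ₀, hτ₀T, hτ₀⟩ := annulus_step hgeo N S hS hM a α hα C hC a le_rfl
  refine ⟨τ₀, hτ₀T, fun t ht => ?_⟩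
  by_cases het : e t ≤ θ
  · simp only [hθdef] at het; simpa [hedef] using le_trans het (by linarith)
  push_neg at het
  have hta : a ≤ t := le_trans hτ₀T ht
  -- last exit before t
  set A := {τ | τ ∈ Icc τ₀ t ∧ e τ ≤ θ} with hAdef
  have hA0 : τ₀ ∈ A := ⟨⟨le_rfl, ht⟩, hτ₀⟩
  have hAne : A.Nonempty := ⟨τ₀, hA0⟩
  have hAbdd : BddAbove A := ⟨t, fun τ hτ => hτ.1.2⟩
  set t₁ := sSup A with ht₁def
  have ht₁mem : τ₀ ≤ t₁ := le_csSup hAbdd hA0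
  have ht₁le : t₁ ≤ t := csSup_le hAne (fun τ hτ => hτ.1.2)
  have ht₁a : a ≤ t₁ := le_trans hτ₀T ht₁mem
  have he₁ : e t₁ ≤ θ := by
    refine le_of_forall_pos_le_add ?_
    intro ε hε
    obtain ⟨τ, hτA, hτlt⟩ := exists_lt_of_lt_csSup hAne (by linarith : t₁ - ε < t₁)
    have hτle : τ ≤ t₁ := le_csSup hAbdd hτA
    have := hlip t₁ ht₁a τ (le_trans hτ₀T hτA.1.1)
    rw [abs_of_nonneg (by linarith)] at this
    have := hτA.2
    linarith
  -- first entry after t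
  obtain ⟨τ', hτ't, hτ'⟩ := annulus_step hgeo N S hS hM a α hα C hC t hta
  set B := {τ | τ ∈ Icc t τ' ∧ e τ ≤ θ} with hBdef
  have hB0 : τ' ∈ B := ⟨⟨hτ't, le_rfl⟩, hτ'⟩
  have hBne : B.Nonempty := ⟨τ', hB0⟩
  have hBbdd : BddBelow B := ⟨t, fun τ hτ => hτ.1.1⟩
  set t₂ := sInf B with ht₂def
  have ht₂ge : t ≤ t₂ := le_csInf hBne (fun τ hτ => hτ.1.1)
  have ht₂le : t₂ ≤ τ' := csInf_le hBbdd hB0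
  have ht₂a : a ≤ t₂ := le_trans hta ht₂ge
  have he₂ : e t₂ ≤ θ := by
    refine le_of_forall_pos_le_add ?_
    intro ε hε
    obtain ⟨τ, hτB, hτlt⟩ := exists_lt_of_csInf_lt hBne (by linarith : t₂ < t₂ + ε)
    have hτge : t₂ ≤ τ := csInf_le hBbdd hτB
    have := hlip t₂ ht₂a τ (le_trans hta hτB.1.1)
    rw [abs_of_nonpos (by linarith)] at this
    have := hτB.2
    linarith
  -- in between, e > θ
  have hmid : ∀ τ, t₁ < τ → τ < t₂ → θ ≤ e τ := by
    intro τ h1 h2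
    by_contra hcc
    push_neg at hcc
    rcases le_total τ t with hle | hge
    · have : τ ∈ A := ⟨⟨le_trans ht₁mem h1.le, hle⟩, hcc.le⟩
      have := le_csSup hAbdd this
      linarith
    · have : τ ∈ B := ⟨⟨hge, le_trans h2.le ht₂le⟩, hcc.le⟩
      have := csInf_le hBbdd this
      linarith
  by_cases hLL : t₂ - t₁ ≤ 4*θ + 2
  · -- short interval
    have := hlip t hta t₁ ht₁a
    rw [abs_of_nonneg (by linarith)] at this
    have : e t ≤ θ + (4*θ + 2) := by linarith
    simp only [hedef] at this ⊢
    simp only [hθdef] at this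
    linarith
  · push_neg at hLL
    obtain ⟨q₁, h₁S, hd₁⟩ := (infDist_lt_iff hS).1 (show e t₁ < θ + 1/2 by linarith)
    obtain ⟨q₂, h₂S, hd₂⟩ := (infDist_lt_iff hS).1 (show e t₂ < θ + 1/2 by linarith)
    have hmb := morse_mid_bound hgeo N S hM α t₁ t₂ θ
      (by simp only [hθdef]; linarith) (by linarith)
      (fun u hu v hv => hα u (le_trans ht₁a hu.1) v (le_trans ht₁a hv.1))
      q₁ q₂ h₁S h₂S
      (by rw [dist_comm]; linarith)
      (by linarith)
      hmid
      (by rw [dist_comm q₁ (α t₁)]; linarith)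
    have := hmb t ⟨by linarith, by linarith⟩
    linarith

end AuxConical2
section AuxConical3

variable {X : Type u} [MetricSpace X]

/-- Lemma B: if `α` converges to the same boundary point as the `N`-Morse ray `β` from
`o` (so that `α` is at bounded distance from `β`), then every far-enough point of `β` is
within `15 N(3,1) + 27` of the image of `α`. -/
lemma tail_close (hgeo : IsGeodesicSpace X) (N : MorseGauge) (β : ℝ → X)
    (hβ : IsGeodesicRay 0 β) (hM : IsMorseSet N (β '' Ici 0))
    (a : ℝ) (α : ℝ → X) (hα : IsGeodesicRay a α) (C : ℝ)
    (hC : ∀ t ≥ a, infDist (α t) (β '' Ici 0) ≤ C) :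
    ∃ S₀ : ℝ, ∀ s ≥ S₀, infDist (β s) (α '' Ici a) ≤ 15 * N.1 3 1 + 27 := by
  set S := β '' Ici 0 with hSdef
  have hSne : S.Nonempty := ⟨β 0, 0, mem_Ici.mpr le_rfl, rfl⟩
  set E := 5 * N.1 3 1 + 7 with hEdef
  obtain ⟨T, hTa, hT⟩ := eventual_close hgeo N S hSne hM a α hα C hC
  have hTd : infDist (α T) S < E + 1 := lt_of_le_of_lt (hT T le_rfl) (by linarith)
  obtain ⟨qT, hqT, hdT⟩ := (infDist_lt_iff hSne).1 hTd
  obtain ⟨σT, hσT0, hσTeq⟩ := hqT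
  refine ⟨σT, fun s hs => ?_⟩
  have hσT0' : (0:ℝ) ≤ σT := hσT0
  have hs0 : (0:ℝ) ≤ s := le_trans hσT0' hs
  set d₀ := dist (β 0) (α a) with hd₀def
  have hd₀0 : 0 ≤ d₀ := dist_nonneg
  set t₂ := max T (s + a + d₀ + E + 1) with ht₂def
  have ht₂T : T ≤ t₂ := le_max_left _ _
  have ht₂a : a ≤ t₂ := le_trans hTa ht₂T
  have ht₂s : s + a + d₀ + E + 1 ≤ t₂ := le_max_right _ _
  -- approximate nearest point of α t₂ on β, has parameter ≥ s
  have ht₂d : infDist (α t₂) S < E + 1 := lt_of_le_of_lt (hT t₂ ht₂T) (by linarith)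
  obtain ⟨q₂, hq₂, hd₂⟩ := (infDist_lt_iff hSne).1 ht₂d
  obtain ⟨σ₂, hσ₂0, hσ₂eq⟩ := hq₂
  have hσ₂0' : (0:ℝ) ≤ σ₂ := hσ₂0
  have hβ0σ₂ : dist (β 0) (β σ₂) = σ₂ := by
    rw [ray_dist hβ le_rfl hσ₂0', abs_of_nonpos (by linarith)]; ring
  have hαdist : dist (α a) (α t₂) = t₂ - a := by
    rw [ray_dist hα le_rfl ht₂a, abs_of_nonpos (by linarith)]; ring
  have hσ₂s : s ≤ σ₂ := by
    have h1 : dist (β 0) (α t₂) ≤ dist (β 0) (β σ₂) + dist (β σ₂) (α t₂) := dist_triangle _ _ _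
    have h2 : dist (α a) (α t₂) ≤ dist (α a) (β 0) + dist (β 0) (α t₂) := dist_triangle _ _ _
    rw [hβ0σ₂] at h1
    rw [hαdist] at h2
    have h3 : dist (β σ₂) (α t₂) < E + 1 := by rw [hσ₂eq, dist_comm]; exact hd₂
    have h4 : dist (α a) (β 0) = d₀ := by rw [dist_comm]
    linarith
  -- connectivity argument on [T, t₂]
  set Z₁ := β '' Icc 0 s with hZ₁def
  set Z₂ := β '' Ici s with hZ₂def
  have hZ₁ne : Z₁.Nonempty := ⟨β 0, 0, ⟨le_rfl, hs0⟩, rfl⟩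
  have hZ₂ne : Z₂.Nonempty := ⟨β s, s, mem_Ici.mpr le_rfl, rfl⟩
  set h₁ : ℝ → ℝ := fun τ => infDist (α τ) Z₁ with hh₁def
  set h₂ : ℝ → ℝ := fun τ => infDist (α τ) Z₂ with hh₂def
  set A₁ := {τ | τ ∈ Icc T t₂ ∧ h₁ τ ≤ E + 1} with hA₁def
  have hTA : T ∈ A₁ := by
    refine ⟨⟨le_rfl, ht₂T⟩, ?_⟩
    have : qT ∈ Z₁ := ⟨σT, ⟨hσT0', hs⟩, hσTeq⟩
    calc h₁ T ≤ dist (α T) qT := infDist_le_dist_of_mem this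
    _ ≤ E + 1 := hdT.le
  have hcover : ∀ τ ∈ Icc T t₂, h₁ τ ≤ E + 1 ∨ h₂ τ ≤ E + 1 := by
    intro τ hτ
    have : infDist (α τ) S < E + 1 := lt_of_le_of_lt (hT τ hτ.1) (by linarith)
    obtain ⟨q, hq, hd⟩ := (infDist_lt_iff hSne).1 this
    obtain ⟨σ, hσ0, hσeq⟩ := hq
    rcases le_total σ s with hσs | hσs
    · exact Or.inl (le_trans (infDist_le_dist_of_mem ⟨σ, ⟨hσ0, hσs⟩, hσeq⟩) hd.le)
    · exact Or.inr (le_trans (infDist_le_dist_of_mem ⟨σ, mem_Ici.mpr hσs, hσeq⟩) hd.le)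
  have hA₁ne : A₁.Nonempty := ⟨T, hTA⟩
  have hA₁bdd : BddAbove A₁ := ⟨t₂, fun τ hτ => hτ.1.2⟩
  set τs := sSup A₁ with hτsdef
  have hτsT : T ≤ τs := le_csSup hA₁bdd hTA
  have hτst₂ : τs ≤ t₂ := csSup_le hA₁ne (fun τ hτ => hτ.1.2)
  have hτsa : a ≤ τs := le_trans hTa hτsT
  have hτsA₁ : h₁ τs ≤ E + 1 := by
    refine le_of_forall_pos_le_add ?_
    intro ε hε
    obtain ⟨τ, hτA, hτlt⟩ := exists_lt_of_lt_csSup hA₁ne (by linarith : τs - ε < τs)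
    have hτle : τ ≤ τs := le_csSup hA₁bdd hτA
    have hlp := infDist_ray_lip hα Z₁ hτsa (le_trans hTa hτA.1.1)
    rw [abs_of_nonneg (by linarith)] at hlp
    have := hτA.2
    simp only [hh₁def] at *
    linarith
  have hτsA₂ : h₂ τs ≤ E + 1 := by
    refine le_of_forall_pos_le_add ?_
    intro ε hε
    rcases lt_or_ge τs t₂ with hlt | hge
    · set τε := min (τs + ε) t₂ with hτεdef
      have hτε1 : τs < τε := lt_min (by linarith) hlt
      have hτε2 : τε ≤ t₂ := min_le_right _ _
      have hτεmem : τε ∈ Icc T t₂ := ⟨le_trans hτsT hτε1.le, hτε2⟩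
      have hτεnot : τε ∉ A₁ := fun hmem => absurd (le_csSup hA₁bdd hmem) (not_le.mpr hτε1)
      have hτεA₂ : h₂ τε ≤ E + 1 := by
        rcases hcover τε hτεmem with h | h
        · exact absurd ⟨hτεmem, h⟩ hτεnot
        · exact h
      have hlp := infDist_ray_lip hα Z₂ hτsa (le_trans hTa hτεmem.1)
      rw [abs_of_nonpos (by linarith)] at hlp
      have hτεb : τε ≤ τs + ε := min_le_left _ _
      simp only [hh₂def] at *
      linarith
    · have heq2 : τs = t₂ := le_antisymm hτst₂ hge
      have hq2Z : q₂ ∈ Z₂ := ⟨σ₂, mem_Ici.mpr hσ₂s, hσ₂eq⟩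
      have hfin : h₂ τs ≤ E + 1 := by
        rw [heq2]
        exact le_trans (infDist_le_dist_of_mem hq2Z) hd₂.le
      linarith
  -- extract two points
  obtain ⟨p₁, hp₁, hdp₁⟩ := (infDist_lt_iff hZ₁ne).1 (lt_of_le_of_lt hτsA₁ (by linarith : E + 1 < E + 2))
  obtain ⟨p₂, hp₂, hdp₂⟩ := (infDist_lt_iff hZ₂ne).1 (lt_of_le_of_lt hτsA₂ (by linarith : E + 1 < E + 2))
  obtain ⟨u₁, hu₁, hu₁eq⟩ := hp₁
  obtain ⟨u₂, hu₂, hu₂eq⟩ := hp₂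
  have hu₁0 : (0:ℝ) ≤ u₁ := hu₁.1
  have hu₁s : u₁ ≤ s := hu₁.2
  have hu₂s : s ≤ u₂ := hu₂
  have hu₂0 : (0:ℝ) ≤ u₂ := le_trans hs0 hu₂s
  have hd12 : dist (β u₁) (β u₂) = u₂ - u₁ := by
    rw [ray_dist hβ hu₁0 hu₂0, abs_of_nonpos (by linarith)]; ring
  have hd12b : dist (β u₁) (β u₂) ≤ 2*E + 4 := by
    calc dist (β u₁) (β u₂) ≤ dist (β u₁) (α τs) + dist (α τs) (β u₂) := dist_triangle _ _ _
    _ ≤ (E + 2) + (E + 2) := by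
        rw [dist_comm (β u₁) (α τs)]
        rw [hu₁eq, hu₂eq] at *
        exact add_le_add hdp₁.le hdp₂.le
    _ = 2*E + 4 := by ring
  have hsu₁ : s - u₁ ≤ 2*E + 4 := by rw [hd12] at hd12b; linarith
  have hds : dist (β s) (α τs) ≤ 3*E + 6 := by
    have h1 : dist (β s) (β u₁) = s - u₁ := by
      rw [ray_dist hβ hs0 hu₁0, abs_of_nonneg (by linarith)]
    calc dist (β s) (α τs) ≤ dist (β s) (β u₁) + dist (β u₁) (α τs) := dist_triangle _ _ _
    _ ≤ (s - u₁) + (E + 2) := by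
        rw [h1, dist_comm (β u₁) (α τs), hu₁eq]
        exact add_le_add le_rfl hdp₁.le
    _ ≤ 3*E + 6 := by linarith
  calc infDist (β s) (α '' Ici a) ≤ dist (β s) (α τs) :=
        infDist_le_dist_of_mem ⟨τs, mem_Ici.mpr hτsa, rfl⟩
  _ ≤ 3*E + 6 := hds
  _ = 15 * N.1 3 1 + 27 := by rw [hEdef]; ring

/-- `FinHausdorff` utilities -/
lemma finH_refl (S : Set X) : FinHausdorff S S :=
  ⟨0, fun s hs => ⟨s, hs, by simp⟩, fun t ht => ⟨t, ht, by simp⟩⟩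

lemma finH_symm {S T : Set X} (h : FinHausdorff S T) : FinHausdorff T S := by
  obtain ⟨C, h1, h2⟩ := h
  exact ⟨C, fun t ht => by obtain ⟨s, hs, hd⟩ := h2 t ht; exact ⟨s, hs, by rw [dist_comm]; exact hd⟩,
    fun s hs => by obtain ⟨t, ht, hd⟩ := h1 s hs; exact ⟨t, ht, by rw [dist_comm]; exact hd⟩⟩

lemma finH_trans {S T U : Set X} (h : FinHausdorff S T) (h' : FinHausdorff T U) :
    FinHausdorff S U := by
  obtain ⟨C, h1, h2⟩ := h
  obtain ⟨C', h1', h2'⟩ := h'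
  refine ⟨C + C', fun s hs => ?_, fun u hu => ?_⟩
  · obtain ⟨t, ht, hd⟩ := h1 s hs
    obtain ⟨u, hu, hd'⟩ := h1' t ht
    exact ⟨u, hu, le_trans (dist_triangle _ _ _) (add_le_add hd hd')⟩
  · obtain ⟨t, ht, hd⟩ := h2' u hu
    obtain ⟨s, hs, hd'⟩ := h2 t ht
    refine ⟨s, hs, ?_⟩
    calc dist s u ≤ dist s t + dist t u := dist_triangle _ _ _
    _ ≤ C + C' := add_le_add hd' hd

lemma asympRel_equiv (o : X) : Equivalence (AsympRel o) :=
  ⟨fun p => finH_refl _, fun h => finH_symm h, fun h h' => finH_trans h h'⟩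

end AuxConical3
/-- For `Y ⊆ X` with `ΛY ≠ ∅`, a point `x ∈ ∂X_o` is a Morse conical
limit point of `Y` if and only if there is `K > 0` such that for every `N`-Morse geodesic
ray `α` from `o` representing `x` and every `T > 0` there is `y ∈ Y` within `K` of the
subray `α' (t) = α (t + T)`. -/
theorem conical_iff_tails (X : Type u) [MetricSpace X] [ProperSpace X]
    (hgeo : IsGeodesicSpace X) (o : X) (Y : Set X) (hne : (limitSet o Y).Nonempty)
    (x : MorseBoundary o) :
    IsMorseConicalLimitPoint o Y x ↔
      ∃ K > (0:ℝ), ∀ (N : MorseGauge) (α : ℝ → X), IsGeodesicRay 0 α → α 0 = o →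
        IsMorseSet N (α '' Set.Ici 0) → RayConvergesTo o 0 α x →
        ∀ T > (0:ℝ), ∃ y ∈ Y,
          Metric.infDist y ((fun t => α (t + T)) '' Set.Ici 0) ≤ K := by
  constructor
  · -- conical ⇒ tails
    rintro ⟨K, hK, hcon⟩
    refine ⟨K, hK, ?_⟩
    intro N α hray hα0 hMorse hconv T hT
    have hrayT : IsGeodesicRay T α := fun u hu v hv =>
      hray u (mem_Ici.mpr (le_trans hT.le hu)) v (mem_Ici.mpr (le_trans hT.le hv))
    have hsub : α '' Ici T ⊆ α '' Ici 0 :=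
      image_mono (Ici_subset_Ici.mpr hT.le)
    have hMT : ∃ M : MorseGauge, IsMorseSet M (α '' Ici T) := by
      refine ⟨⟨fun k c => N.1 k c + T, fun k c hk hc => add_nonneg (N.2 k c hk hc) hT.le⟩, ?_⟩
      intro k c hk hc φ s t hst hq hφs hφt u hu
      obtain ⟨p, hp, hd⟩ := hMorse k c hk hc φ s t hst hq (hsub hφs) (hsub hφt) u hu
      obtain ⟨r, hr0, rfl⟩ := hp
      have hr0' : (0:ℝ) ≤ r := hr0
      by_cases hrT : T ≤ r
      · refine ⟨α r, ⟨r, mem_Ici.mpr hrT, rfl⟩, ?_⟩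
        show dist (φ u) (α r) ≤ N.1 k c + T
        linarith
      · push_neg at hrT
        refine ⟨α T, ⟨T, mem_Ici.mpr le_rfl, rfl⟩, ?_⟩
        show dist (φ u) (α T) ≤ N.1 k c + T
        have hdrT : dist (α r) (α T) = |r - T| := ray_dist hray hr0' hT.le
        rw [abs_of_nonpos (by linarith)] at hdrT
        calc dist (φ u) (α T) ≤ dist (φ u) (α r) + dist (α r) (α T) := dist_triangle _ _ _
        _ ≤ N.1 k c + (T - r) := by rw [hdrT]; linarith
        _ ≤ N.1 k c + T := by linarith
    have hconvT : RayConvergesTo o T α x := by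
      obtain ⟨N', β', hb', C₁, hh₁, hh₂⟩ := hconv
      refine ⟨N', β', hb', C₁ + T, ?_, ?_⟩
      · rintro z ⟨r, hr, rfl⟩
        obtain ⟨q, hq, hd⟩ := hh₁ (α r) ⟨r, mem_Ici.mpr (le_trans hT.le hr), rfl⟩
        exact ⟨q, hq, by linarith⟩
      · intro q hq
        obtain ⟨z, hz, hd⟩ := hh₂ q hq
        obtain ⟨r, hr0, rfl⟩ := hz
        have hr0' : (0:ℝ) ≤ r := hr0
        by_cases hrT : T ≤ r
        · exact ⟨α r, ⟨r, mem_Ici.mpr hrT, rfl⟩, by linarith⟩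
        · push_neg at hrT
          refine ⟨α T, ⟨T, mem_Ici.mpr le_rfl, rfl⟩, ?_⟩
          have hdrT : dist (α r) (α T) = |r - T| := ray_dist hray hr0' hT.le
          rw [abs_of_nonpos (by linarith)] at hdrT
          calc dist (α T) q ≤ dist (α T) (α r) + dist (α r) q := dist_triangle _ _ _
          _ ≤ (T - r) + C₁ := by
              rw [dist_comm (α T) (α r), hdrT]
              linarith
          _ ≤ C₁ + T := by linarith
    obtain ⟨y, hy, hyd⟩ := hcon T α hrayT hMT hconvT
    refine ⟨y, hy, ?_⟩
    have himg : (fun t => α (t + T)) '' Ici 0 = α '' Ici T := by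
      ext z
      simp only [mem_image, mem_Ici]
      constructor
      · rintro ⟨t, ht, rfl⟩
        exact ⟨t + T, by linarith, rfl⟩
      · rintro ⟨r, hr, rfl⟩
        exact ⟨r - T, by linarith, by rw [sub_add_cancel]⟩
    rw [himg]
    exact hyd
  · -- tails ⇒ conical
    rintro ⟨K, hK, hTails⟩
    obtain ⟨p, hp⟩ := Quot.exists_rep x
    have hQ0 : 0 ≤ p.1.1 3 1 := p.1.2 3 1 (by norm_num) (by norm_num)
    refine ⟨K + (15 * p.1.1 3 1 + 27) + 1, by linarith, ?_⟩
    intro a α hray hMorse hconv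
    obtain ⟨N, β, hb, C₁, hh₁, hh₂⟩ := hconv
    have hbb : AsympRel o ⟨N, β⟩ p := by
      have heqq : Quot.mk (AsympRel o) ⟨N, β⟩ = Quot.mk (AsympRel o) p := hb.trans hp.symm
      exact ((asympRel_equiv o).eqvGen_iff).mp (Quot.eq.mp heqq)
    obtain ⟨C₂, h₂, h₂'⟩ := hbb
    have hC : ∀ t ≥ a, infDist (α t) (p.2.1 '' Ici 0) ≤ C₁ + C₂ := by
      intro t ht
      obtain ⟨q, hq, hd⟩ := hh₁ (α t) ⟨t, mem_Ici.mpr ht, rfl⟩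
      obtain ⟨r, hr, hd'⟩ := h₂ q hq
      calc infDist (α t) (p.2.1 '' Ici 0) ≤ dist (α t) r := infDist_le_dist_of_mem hr
      _ ≤ dist (α t) q + dist q r := dist_triangle _ _ _
      _ ≤ C₁ + C₂ := add_le_add hd hd'
    obtain ⟨S₀, hS₀⟩ := tail_close hgeo p.1 p.2.1 p.2.2.1 p.2.2.2.2 a α hray (C₁ + C₂) hC
    set T := max S₀ 1 with hTdef
    have hT1 : (0:ℝ) < T := lt_of_lt_of_le one_pos (le_max_right _ _)
    have hconv₀ : RayConvergesTo o 0 p.2.1 x := ⟨p.1, p.2, hp, finH_refl _⟩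
    obtain ⟨y, hy, hyd⟩ := hTails p.1 p.2.1 p.2.2.1 p.2.2.2.1 p.2.2.2.2 hconv₀ T hT1
    have himg : (fun t => p.2.1 (t + T)) '' Ici 0 = p.2.1 '' Ici T := by
      ext z
      simp only [mem_image, mem_Ici]
      constructor
      · rintro ⟨t, ht, rfl⟩
        exact ⟨t + T, by linarith, rfl⟩
      · rintro ⟨r, hr, rfl⟩
        exact ⟨r - T, by linarith, by rw [sub_add_cancel]⟩
    rw [himg] at hyd
    have hne2 : (p.2.1 '' Ici T).Nonempty := ⟨p.2.1 T, T, mem_Ici.mpr le_rfl, rfl⟩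
    have hlt : infDist y (p.2.1 '' Ici T) < K + 1 := lt_of_le_of_lt hyd (by linarith)
    obtain ⟨z, hzmem, hz⟩ := (infDist_lt_iff hne2).1 hlt
    obtain ⟨s, hsT, rfl⟩ := hzmem
    refine ⟨y, hy, ?_⟩
    have hsS₀ : S₀ ≤ s := le_trans (le_max_left _ _) hsT
    calc infDist y (α '' Ici a) ≤ infDist (p.2.1 s) (α '' Ici a) + dist y (p.2.1 s) :=
          infDist_le_infDist_add_dist
    _ ≤ (15 * p.1.1 3 1 + 27) + (K + 1) := add_le_add (hS₀ s hsS₀) hz.le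
    _ = K + (15 * p.1.1 3 1 + 27) + 1 := by ring
end

section
/- Let (X,d) be a proper, geodesic, δ-hyperbolic metric space and let α:[0,∞)→X be a geodesic ray. Define α':[0,∞)→X by α'(t)=α(t+12δ). Then the horoball H(α') is contained in the funnel F(α). -/
set_option autoImplicit false

universe u v

open Set Metric

lemma my_le_infDist {Y : Type u} [MetricSpace Y] {s : Set Y} {x : Y} {c : ℝ}
    (hs : s.Nonempty) (h : ∀ y ∈ s, c ≤ dist x y) : c ≤ Metric.infDist x s := by
  by_contra hlt
  push_neg at hlt
  obtain ⟨y, hy, hd⟩ := (Metric.infDist_lt_iff hs).1 hlt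
  exact absurd (h y hy) (by linarith)

/-- In a proper geodesic `δ`-hyperbolic space, for a geodesic ray
`α : [0,∞) → X` and `α'(t) = α(t + 12δ)`, the horoball `H(α')` is contained in the funnel
`F(α)`. -/
theorem horoball_subset_funnel (X : Type u) [MetricSpace X] [ProperSpace X]
    (hgeo : IsGeodesicSpace X) (δ : ℝ) (hδ : 0 ≤ δ) (hhyp : IsGromovHyperbolic X δ)
    (α : ℝ → X) (hα : IsGeodesicRay 0 α) :
    horoball δ 0 (fun t => α (t + 12 * δ)) ⊆ funnel 0 α := by
  rintro x ⟨b, hb0, β, hβ, ⟨T, hT⟩, t, htb, hβt⟩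
  have ht0 : (0:ℝ) ≤ t := le_trans hb0 htb
  set S : Set X := α '' Set.Ici 0 with hSdef
  have hS0 : α 0 ∈ S := ⟨0, Set.mem_Ici.mpr le_rfl, rfl⟩
  have hSne : S.Nonempty := ⟨α 0, hS0⟩
  have habs : ∀ u v : ℝ, 0 ≤ u → u ≤ v → dist (α u) (α v) = v - u := by
    intro u v hu huv
    rw [hα u hu v (le_trans hu huv), abs_of_nonpos (by linarith)]
    ring
  -- continuity of α on [0,∞)
  have hcont : ContinuousOn α (Set.Ici 0) := by
    apply LipschitzOnWith.continuousOn (K := 1)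
    intro u hu v hv
    rw [edist_dist, hα u hu v hv, ENNReal.coe_one, one_mul, edist_dist, Real.dist_eq]
  -- existence of a nearest point
  set R := dist x (α 0) with hR
  have hR0 : 0 ≤ R := dist_nonneg
  have hKc : IsCompact (α '' Set.Icc 0 (2*R+1)) :=
    isCompact_Icc.image_of_continuousOn (hcont.mono Set.Icc_subset_Ici_self)
  have hK0 : α 0 ∈ α '' Set.Icc 0 (2*R+1) := ⟨0, ⟨le_rfl, by linarith⟩, rfl⟩
  obtain ⟨p, hpK, hpmin'⟩ := hKc.exists_isMinOn ⟨α 0, hK0⟩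
      (f := fun y => dist x y) (continuous_const.dist continuous_id).continuousOn
  have hpmin : ∀ y ∈ α '' Set.Icc 0 (2*R+1), dist x p ≤ dist x y := fun y hy => hpmin' hy
  have hpS : p ∈ S := by
    obtain ⟨w, hw, rfl⟩ := hpK
    exact ⟨w, hw.1, rfl⟩
  have hglobal : ∀ q ∈ S, dist x p ≤ dist x q := by
    rintro q ⟨w, hw0, rfl⟩
    rcases le_or_gt w (2*R+1) with hwM | hwM
    · exact hpmin _ ⟨w, ⟨hw0, hwM⟩, rfl⟩
    · have h1 : dist (α 0) (α w) = w := by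
        rw [habs 0 w (le_refl 0) hw0]; ring
      have h2 : dist (α 0) (α w) ≤ dist (α 0) x + dist x (α w) := dist_triangle _ _ _
      have h3 : dist x p ≤ R := hpmin _ hK0
      rw [dist_comm (α 0) x] at h2
      linarith
  have hpinf : Metric.infDist x S = dist x p :=
    le_antisymm (Metric.infDist_le_dist_of_mem hpS) (my_le_infDist hSne hglobal)
  have hNPne : (nearestPoints S x).Nonempty := ⟨p, hpS, hpinf.symm⟩
  show Metric.infDist x S ≤ Metric.infDist (α 0) (nearestPoints S x)
  apply my_le_infDist hNPne
  rintro q ⟨⟨s, hs0, rfl⟩, hqd⟩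
  have hs0' : (0:ℝ) ≤ s := hs0
  have hds : dist (α 0) (α s) = s := by rw [habs 0 s (le_refl 0) hs0]; ring
  rw [hds]
  apply le_of_forall_pos_le_add
  intro ε hε
  set w : ℝ := s + 2*δ + ε with hwdef
  set u : ℝ := max T (max t (max b w)) + 1 with hudef
  set r : ℝ := u + 12*δ with hrdef
  have huT : T ≤ u := by have := le_max_left T (max t (max b w)); linarith
  have hut : t ≤ u := by
    have h1 := le_max_left t (max b w)
    have h2 := le_max_right T (max t (max b w)); linarith
  have hub : b ≤ u := by
    have h1 := le_max_left b w
    have h2 := le_max_right t (max b w)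
    have h3 := le_max_right T (max t (max b w)); linarith
  have huw : w ≤ u := by
    have h1 := le_max_right b w
    have h2 := le_max_right t (max b w)
    have h3 := le_max_right T (max t (max b w)); linarith
  have hw0 : (0:ℝ) ≤ w := by simp only [hwdef]; linarith
  have hws : s ≤ w := by simp only [hwdef]; linarith
  have hrw : w ≤ r := by simp only [hrdef]; linarith
  have hrs : s ≤ r := le_trans hws hrw
  have hr0 : (0:ℝ) ≤ r := le_trans hw0 hrw
  -- x = β t is deep along α
  have hr : dist x (α r) ≤ r - t - 6*δ := by
    have h1 : dist (β t) (β u) = u - t := by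
      rw [hβ t htb u hub, abs_of_nonpos (by linarith)]; ring
    have h2 : dist (β u) (α (u + 12*δ)) ≤ 6*δ := by
      have := hT u huT
      simpa [dist_comm] using this
    calc dist x (α r) = dist (β t) (α (u + 12*δ)) := by rw [hβt]
      _ ≤ dist (β t) (β u) + dist (β u) (α (u + 12*δ)) := dist_triangle _ _ _
      _ ≤ (u - t) + 6*δ := by rw [h1]; linarith
      _ = r - t - 6*δ := by simp only [hrdef]; ring
  have e1 : dist (α s) (α r) = r - s := habs s r hs0 hrs
  have e2 : dist (α w) (α r) = r - w := habs w r hw0 hrw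
  have e3 : dist (α w) (α s) = w - s := by
    rw [dist_comm, habs s w hs0 hws]
  have hDw : Metric.infDist x S ≤ dist x (α w) :=
    Metric.infDist_le_dist_of_mem ⟨w, hw0, rfl⟩
  have hmax := hhyp x (α w) (α s) (α r)
  rw [e1, e2, e3, hqd] at hmax
  rcases le_total (Metric.infDist x S + (r - w)) (dist x (α r) + (w - s)) with hc | hc
  · rw [max_eq_right hc] at hmax
    linarith
  · rw [max_eq_left hc] at hmax
    linarith
end
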